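/- arXiv:2012.13975 — 3 statements merged into one kernel-verified Lean document; each statement's English description precedes it below -/
import Mathlib

section
/- For every real η ≥ 1, define t(η) = (e/(e−1)) · η^η/(η+1)^{η+1}, ε₁(η) = (e−1)/e − (1 − (e/(e−1)) · η^η/(η+1)^{η+1})^η, and ε₂(η) = 1 − (η/(η+1))^η − exp(−(e/(e−1)) · (η/(η+1))^η). Then ε₁(η) ≤ ε₂(η). -/
/-!
Write `u = (η/(η+1))^η = exp (ρ - 1)`, where `1/(2(η+1)) ≤ ρ ≤ 1/(η+1)`, and
`w = 1 - e u/(e-1) = 1 - e^ρ/(e-1) ≥ 0`. Since the base of the MaxExp term is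
`(η + w)/(η + 1)`, after multiplying by `e` the inequality becomes
`e^w - 1 ≤ e^ρ ((1 + w/η)^η - 1)`. With `(1 + w/η)^η ≥ exp (w - D)`, `D = w²/(2η)`,
this follows from `(e^w - 1)(e^(ρ-D) - 1) ≥ w (ρ - D) ≥ D e^ρ ≥ e^ρ - e^(ρ-D)`,
whose middle step reduces to the numerical inequality `w (w + e^ρ) ≤ 2ηρ`.
-/

open Real

lemma Real.log_le_sub_inv_div_two {y : ℝ} (hy : 1 ≤ y) : log y ≤ (y - y⁻¹) / 2 := by
  have h := self_le_sinh_iff.mpr (log_nonneg hy)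
  rwa [sinh_eq, exp_neg, exp_log (by linarith)] at h

lemma Real.sub_sq_div_two_le_log_one_add {x : ℝ} (hx : 0 ≤ x) :
    x - x ^ 2 / 2 ≤ log (1 + x) := by
  refine le_trans ?_ (le_log_one_add_of_nonneg hx)
  rw [le_div_iff₀ (by linarith)]
  nlinarith [pow_nonneg hx 3]

lemma Real.exp_sub_sq_div_le_one_add_div_rpow {w η : ℝ} (hw : 0 ≤ w) (hη : 0 < η) :
    exp (w - w ^ 2 / (2 * η)) ≤ (1 + w / η) ^ η := by
  rw [rpow_def_of_pos (by positivity), exp_le_exp]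
  have hlog := sub_sq_div_two_le_log_one_add (div_nonneg hw hη.le)
  calc w - w ^ 2 / (2 * η) = (w / η - (w / η) ^ 2 / 2) * η := by field_simp
    _ ≤ log (1 + w / η) * η := by gcongr

lemma Real.exp_one_half_lt_exp_one_sub_one : exp (1 / 2) < exp 1 - 1 := by
  have hsq : exp (1 / 2) * exp (1 / 2) = exp 1 := by rw [← exp_add]; norm_num
  nlinarith [exp_pos (1 / 2), exp_one_gt_d9, exp_one_lt_d9]

lemma exists_rpow_div_add_one_eq_exp {η : ℝ} (hη : 0 < η) :
    ∃ ρ, (η / (η + 1)) ^ η = exp (ρ - 1) ∧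
      1 / (2 * (η + 1)) ≤ ρ ∧ ρ ≤ 1 / (η + 1) := by
  refine ⟨1 + η * log (η / (η + 1)), ?_, ?_, ?_⟩
  · rw [rpow_def_of_pos (by positivity)]; ring_nf
  · have hlog := log_le_sub_inv_div_two (y := (η + 1) / η) (by rw [le_div_iff₀ hη]; linarith)
    have hval : η * (((η + 1) / η - ((η + 1) / η)⁻¹) / 2) = 1 - 1 / (2 * (η + 1)) := by
      field_simp; ring
    rw [← inv_div (η + 1) η, log_inv]
    nlinarith [mul_le_mul_of_nonneg_left hlog hη.le]
  · have hlog := log_le_sub_one_of_pos (x := η / (η + 1)) (by positivity)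
    have hval : η * (η / (η + 1) - 1) = 1 / (η + 1) - 1 := by field_simp; ring
    nlinarith [mul_le_mul_of_nonneg_left hlog hη.le]

lemma exp_sub_one_le_exp_mul_exp_sub_sub_one {w ρ D : ℝ} (hw : 0 ≤ w) (hDρ : D ≤ ρ)
    (h : D * exp ρ ≤ w * (ρ - D)) : exp w - 1 ≤ exp ρ * (exp (w - D) - 1) := by
  have hprod : w * (ρ - D) ≤ (exp w - 1) * (exp (ρ - D) - 1) :=
    mul_le_mul (by linarith [add_one_le_exp w]) (by linarith [add_one_le_exp (ρ - D)])
      (by linarith) (by linarith [add_one_le_exp w])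
  have hdrop : exp ρ - exp (ρ - D) ≤ D * exp ρ := by
    rw [sub_eq_add_neg ρ, exp_add]
    nlinarith [add_one_le_exp (-D), exp_pos ρ]
  have hswap : exp w * exp (ρ - D) = exp ρ * exp (w - D) := by
    rw [← exp_add, ← exp_add]; ring_nf
  nlinarith

lemma exp_sub_one_le_exp_mul_one_add_div_rpow_sub_one {w ρ η : ℝ} (hw : 0 ≤ w) (hη : 0 < η)
    (h : w * (w + exp ρ) ≤ 2 * η * ρ) : exp w - 1 ≤ exp ρ * ((1 + w / η) ^ η - 1) := by
  have hD : 2 * η * (w ^ 2 / (2 * η)) = w ^ 2 := by field_simp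
  have hDρ : w ^ 2 / (2 * η) ≤ ρ := by nlinarith [exp_pos ρ]
  have hDw : w ^ 2 / (2 * η) * exp ρ ≤ w * (ρ - w ^ 2 / (2 * η)) := by
    refine le_of_mul_le_mul_left ?_ (by positivity : 0 < 2 * η)
    linear_combination mul_le_mul_of_nonneg_left h hw + (exp ρ + w) * hD
  calc exp w - 1 ≤ exp ρ * (exp (w - w ^ 2 / (2 * η)) - 1) :=
        exp_sub_one_le_exp_mul_exp_sub_sub_one hw hDρ hDw
    _ ≤ exp ρ * ((1 + w / η) ^ η - 1) := by
        gcongr; exact exp_sub_sq_div_le_one_add_div_rpow hw hη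

lemma mul_add_le_one_sub_of_eq_one_sub_div {w P τ : ℝ} (hτ0 : 0 ≤ τ) (hτ : τ ≤ 1 / 2)
    (hP : 1 + τ / 2 ≤ P) (hw : w = 1 - P / (exp 1 - 1)) : w * (w + P) ≤ 1 - τ := by
  have he : 0 < exp 1 - 1 := by linarith [exp_one_gt_d9]
  set X := 1 / (exp 1 - 1) with hX
  have hX_lo : 29 / 50 ≤ X := by rw [hX, le_div_iff₀ he]; linarith [exp_one_lt_d9]
  have hX_hi : X ≤ 291 / 500 := by rw [hX, div_le_iff₀ he]; linarith [exp_one_gt_d9]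
  have hwX : w = 1 - X * P := by rw [hw, hX]; ring
  subst hwX
  -- `P ↦ (1 - X P)(1 + (1 - X) P)` decreases for `P ≥ 1` because `X > 1/2`.
  calc (1 - X * P) * (1 - X * P + P) = (1 - X * P) * (1 + (1 - X) * P) := by ring
    _ ≤ (1 - X * (1 + τ / 2)) * (1 + (1 - X) * (1 + τ / 2)) := by
        nlinarith [mul_nonneg (sub_nonneg.mpr hP) (mul_nonneg (by linarith : (0 : ℝ) ≤ X)
          (by linarith : (0 : ℝ) ≤ 1 - X))]
    _ ≤ (1 - 29 / 50 * (1 + τ / 2)) * (1 + 21 / 50 * (1 + τ / 2)) := by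
        apply mul_le_mul <;> nlinarith
    _ ≤ 1 - τ := by nlinarith

lemma one_sub_mul_rpow_div_rpow_add_one_rpow {η a : ℝ} (hη : 0 < η)
    (ha : a * (η / (η + 1)) ^ η ≤ η + 1) :
    (1 - a * η ^ η / (η + 1) ^ (η + 1)) ^ η
      = (1 + (1 - a * (η / (η + 1)) ^ η) / η) ^ η * (η / (η + 1)) ^ η := by
  have hbase : 1 - a * η ^ η / (η + 1) ^ (η + 1)
      = (1 + (1 - a * (η / (η + 1)) ^ η) / η) * (η / (η + 1)) := by
    rw [rpow_add (by linarith), rpow_one, div_rpow hη.le (by linarith)]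
    field_simp
    ring
  have hnonneg : 0 ≤ 1 + (1 - a * (η / (η + 1)) ^ η) / η := by
    rw [one_add_div hη.ne']
    exact div_nonneg (by linarith) hη.le
  rw [hbase, mul_rpow hnonneg (by positivity)]

/-- Theorem 4 (gap inequality, Eq. 22): with `t(η) = (e/(e-1)) η^η/(η+1)^{η+1}`,
the gap `ε₁` between MaxExp and HDP at `λ = t(η)` is at most the gap `ε₂`
at `λ = 1/(η+1)`. -/
theorem maxExp_HDP_gap_ineq (η : ℝ) (hη : 1 ≤ η) :
    (Real.exp 1 - 1) / Real.exp 1 -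
        (1 - (Real.exp 1 / (Real.exp 1 - 1)) * η ^ η / (η + 1) ^ (η + 1)) ^ η
      ≤ 1 - (η / (η + 1)) ^ η -
          Real.exp (-(Real.exp 1 / (Real.exp 1 - 1)) * (η / (η + 1)) ^ η) := by
  have hη0 : 0 < η := by linarith
  obtain ⟨ρ, hu, hρ_lo, hρ_hi⟩ := exists_rpow_div_add_one_eq_exp hη0
  have he : 0 < exp 1 - 1 := by linarith [exp_one_gt_d9]
  set w := 1 - exp ρ / (exp 1 - 1) with hw
  have hcu : exp 1 / (exp 1 - 1) * (η / (η + 1)) ^ η = 1 - w := by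
    rw [hu, exp_sub, hw]; field_simp; ring
  have hτ : 1 / (η + 1) ≤ 1 / 2 := by gcongr; linarith
  have hw0 : 0 ≤ w := by
    rw [hw, sub_nonneg, div_le_one he]
    exact ((exp_le_exp.mpr (hρ_hi.trans hτ)).trans_lt exp_one_half_lt_exp_one_sub_one).le
  have hslack : w * (w + exp ρ) ≤ 2 * η * ρ := by
    refine (mul_add_le_one_sub_of_eq_one_sub_div (by positivity) hτ ?_ hw).trans ?_
    · linarith [add_one_le_exp ρ, show 1 / (η + 1) / 2 = 1 / (2 * (η + 1)) by field_simp]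
    · have : 1 - 1 / (η + 1) = 2 * η * (1 / (2 * (η + 1))) := by field_simp; ring
      rw [this]; gcongr
  have key := exp_sub_one_le_exp_mul_one_add_div_rpow_sub_one hw0 hη0 hslack
  rw [one_sub_mul_rpow_div_rpow_add_one_rpow hη0 (by linarith), neg_mul, hcu, sub_sub_cancel,
    hu, exp_sub, show -(1 - w) = w - 1 by ring, exp_sub, ← sub_nonneg]
  have hgap : 1 - exp ρ / exp 1 - exp w / exp 1
        - ((exp 1 - 1) / exp 1 - (1 + w / η) ^ η * (exp ρ / exp 1))
      = (exp ρ * ((1 + w / η) ^ η - 1) - (exp w - 1)) / exp 1 := by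
    field_simp; ring
  rw [hgap]
  exact div_nonneg (by linarith) (exp_pos 1).le
end

section
/- Let η > 1 be real and set α(η) = (e/(e−1)) · (η/(η+1))^{η+1} and y(η) = (e/(e−1)) · (η/(η+1))^η. Consider the reparametrized MaxExp g(y) = 1 − (1 − α(η)/(η·y))^η and the linear function l(y) = (1/e − 1)·y + 1. Then g and l touch tangentially at y(η): g(y(η)) = l(y(η)) = 1 − (η/(η+1))^η, and g'(y(η)) = l'(y(η)) = 1/e − 1. -/
/-!
Write `r = η/(η+1)` and `c = e/(e-1)`, so that `y = c r^η` and `α = r y`. Then the base of the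
power is `1 - α/(η y) = 1 - r/η = r`, which gives `g y = 1 - r^η`, and the chain rule gives
`g' y = -(α/y²) r^(η-1) = -r^η/y = -1/c = 1/e - 1`. The line takes the same value because
`(1/e - 1) c = -1`.
-/

open Real

theorem hasDerivAt_one_sub_one_sub_div_mul_rpow {a k z : ℝ} (hk : k ≠ 0) (hz : z ≠ 0)
    (hb : 1 - a / (k * z) ≠ 0) :
    HasDerivAt (fun x => 1 - (1 - a / (k * x)) ^ k)
      (-(a / z ^ 2) * (1 - a / (k * z)) ^ (k - 1)) z := by
  have hkx : HasDerivAt (fun x => k * x) k z := by simpa using (hasDerivAt_id z).const_mul k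
  have hbase : HasDerivAt (fun x => 1 - a / (k * x)) (a / (k * z ^ 2)) z := by
    refine ((hasDerivAt_const z (1 : ℝ)).sub
      ((hasDerivAt_const z a).div hkx (mul_ne_zero hk hz))).congr_deriv ?_
    field_simp
    ring
  refine ((hasDerivAt_const z (1 : ℝ)).sub (hbase.rpow_const (Or.inl hb))).congr_deriv ?_
  field_simp
  ring

theorem one_sub_mul_rpow_add_one_div {c η : ℝ} (hc : c ≠ 0) (hη : 0 < η) :
    1 - c * (η / (η + 1)) ^ (η + 1) / (η * (c * (η / (η + 1)) ^ η)) = η / (η + 1) := by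
  have hr : 0 < η / (η + 1) := by positivity
  rw [rpow_add_one hr.ne']
  have hrη := (rpow_pos_of_pos hr η).ne'
  field_simp
  ring

theorem hasDerivAt_maxExp_at_tangency {c η : ℝ} (hc : c ≠ 0) (hη : 0 < η) :
    HasDerivAt (fun z => 1 - (1 - c * (η / (η + 1)) ^ (η + 1) / (η * z)) ^ η) (-1 / c)
      (c * (η / (η + 1)) ^ η) := by
  have hr : 0 < η / (η + 1) := by positivity
  have hrη := (rpow_pos_of_pos hr η).ne'
  have hbase := one_sub_mul_rpow_add_one_div hc hη
  refine (hasDerivAt_one_sub_one_sub_div_mul_rpow hη.ne' (mul_ne_zero hc hrη)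
    (by rw [hbase]; exact hr.ne')).congr_deriv ?_
  rw [hbase, rpow_add_one hr.ne', rpow_sub_one hr.ne']
  field_simp

/-- Appendix F (Eq. 40): with `α(η) = (e/(e-1))(η/(η+1))^{η+1}` and
`y(η) = (e/(e-1))(η/(η+1))^η`, the reparametrized MaxExp
`g(y) = 1 - (1 - α/(η y))^η` and the line `l(y) = (1/e - 1)y + 1` touch
tangentially at `y(η)`: equal values `1 - (η/(η+1))^η` and equal first
derivatives `1/e - 1`. -/
theorem maxExp_touches_linear_bound (η : ℝ) (hη : 1 < η) :
    let e : ℝ := Real.exp 1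
    let α : ℝ := (e / (e - 1)) * (η / (η + 1)) ^ (η + 1)
    let y : ℝ := (e / (e - 1)) * (η / (η + 1)) ^ η
    let g : ℝ → ℝ := fun z => 1 - (1 - α / (η * z)) ^ η
    let l : ℝ → ℝ := fun z => (1 / e - 1) * z + 1
    g y = 1 - (η / (η + 1)) ^ η ∧ l y = 1 - (η / (η + 1)) ^ η ∧
      deriv g y = 1 / e - 1 ∧ deriv l y = 1 / e - 1 := by
  intro e α y g l
  have he : e ≠ 0 := (exp_pos 1).ne'
  have he1 : e - 1 ≠ 0 := sub_ne_zero.2 (by simp [e])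
  have hc : e / (e - 1) ≠ 0 := div_ne_zero he he1
  have hη0 : 0 < η := by linarith
  refine ⟨?_, ?_, ?_, ?_⟩
  · simp only [g, α, y, one_sub_mul_rpow_add_one_div hc hη0]
  · simp only [l, y]
    field_simp
    ring
  · rw [(hasDerivAt_maxExp_at_tangency hc hη0).deriv]
    field_simp
    ring
  · simp [l]
end

section
/- Let η̄ > 1 be real, set A = ((η̄ − 1)/η̄)^{η̄} and t = (e/(e−1)) · A/(A + η̄ − 1). Then the scaled reparametrized MaxExp h(y) = (1 − ((e−1)/e)·t) · (1 − (1 − t/y)^{η̄}) touches the linear function l(y) = (1/e − 1)·y + 1 at both y₀ = t and y₁ = t·η̄: h(t) = l(t) = 1 − ((e−1)/e)·t and h(t·η̄) = l(t·η̄) = 1 − ((e−1)/e)·t·η̄. -/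
/-! At `y = t` the MaxExp factor `1 - (1 - t/y)^η̄` equals `1`, so `h t` is the scaling factor
`1 - ((e-1)/e) t`, which is `l t`. At `y = t η̄` one has `(1 - t/y)^η̄ = ((η̄-1)/η̄)^η̄ = A`, and
`t` is chosen exactly so that `s = ((e-1)/e) t` solves `s (A + η̄ - 1) = A`; this linear relation
is equivalent to `(1 - s)(1 - A) = 1 - s η̄`, i.e. to `h (t η̄) = l (t η̄)`. -/

open Real

lemma one_div_sub_one_mul_add_one {c : ℝ} (hc : c ≠ 0) (y : ℝ) :
    (1 / c - 1) * y + 1 = 1 - ((c - 1) / c) * y := by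
  field_simp
  ring

lemma one_sub_one_sub_div_self_rpow {t η : ℝ} (ht : t ≠ 0) (hη : η ≠ 0) :
    1 - (1 - t / t) ^ η = 1 := by
  rw [div_self ht, sub_self, zero_rpow hη, sub_zero]

lemma one_sub_div_mul_rpow {t η : ℝ} (ht : t ≠ 0) (hη : η ≠ 0) :
    (1 - t / (t * η)) ^ η = ((η - 1) / η) ^ η := by
  congr 1
  field_simp

lemma sub_one_div_mul_div_mul_self {c A D : ℝ} (hc : c ≠ 0) (hc₁ : c - 1 ≠ 0) (hD : D ≠ 0) :
    (c - 1) / c * (c / (c - 1) * A / D) * D = A := by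
  field_simp

lemma one_sub_mul_one_sub_eq_of_mul_eq {s A η : ℝ} (h : s * (A + η - 1) = A) :
    (1 - s) * (1 - A) = 1 - s * η := by
  linear_combination h

/-- Appendix P (Eqs. 61–62, time-reversed FAHDP): with
`A = ((η̄-1)/η̄)^η̄` and `t = (e/(e-1))·A/(A + η̄ - 1)`, the scaled
reparametrized MaxExp `h(y) = (1 - ((e-1)/e)t)(1 - (1 - t/y)^η̄)` touches the
line `l(y) = (1/e - 1)y + 1` at both `y₀ = t` and `y₁ = t·η̄`. -/
theorem scaled_maxExp_touches_linear_bound (ηb : ℝ) (hηb : 1 < ηb) :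
    let e : ℝ := Real.exp 1
    let A : ℝ := ((ηb - 1) / ηb) ^ ηb
    let t : ℝ := (e / (e - 1)) * A / (A + ηb - 1)
    let h : ℝ → ℝ := fun y => (1 - ((e - 1) / e) * t) * (1 - (1 - t / y) ^ ηb)
    let l : ℝ → ℝ := fun y => (1 / e - 1) * y + 1
    h t = l t ∧ l t = 1 - ((e - 1) / e) * t ∧
      h (t * ηb) = l (t * ηb) ∧ l (t * ηb) = 1 - ((e - 1) / e) * t * ηb := by
  intro e A t h l
  have he : 1 < e := one_lt_exp_iff.mpr one_pos
  have hη : ηb ≠ 0 := by positivity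
  have hA : 0 < A := rpow_pos_of_pos (div_pos (by linarith) (by linarith)) ηb
  have hD : 0 < A + ηb - 1 := by linarith
  have ht : t ≠ 0 := (div_pos (mul_pos (div_pos (by linarith) (by linarith)) hA) hD).ne'
  have hl (y : ℝ) : l y = 1 - ((e - 1) / e) * y := one_div_sub_one_mul_add_one (by positivity) y
  refine ⟨?_, hl t, ?_, by rw [hl, mul_assoc]⟩
  · change _ * _ = _
    rw [one_sub_one_sub_div_self_rpow ht hη, mul_one, hl]
  · change _ * _ = _
    rw [one_sub_div_mul_rpow ht hη, hl, ← mul_assoc]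
    exact one_sub_mul_one_sub_eq_of_mul_eq
      (sub_one_div_mul_div_mul_self (by positivity) (by linarith) hD.ne')
end
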